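/- Let θ: ℝ₊ → ℝ₊ be monotone non-decreasing and θ̃(r) = (log 2)^{-2} ∫_r^{2r} (1/t) ∫_t^{2t} θ(s)/s ds dt. Then θ̃ is differentiable with θ̃'(r) = (log 2)^{-2} ∫_1^2 (θ(2rt) - θ(rt))/(rt) dt ≥ 0; in particular θ̃ is monotone non-decreasing. -/

import Mathlib

/-!
Write `θ̃(r) = (log 2)⁻² ∫_r^{2r} g` with `g(t) = t⁻¹ ∫_t^{2t} θ(s)/s ds`. Since `θ` is monotone,
`θ(s)/s` is locally integrable on `(0, ∞)`, so `g` is continuous there and the fundamental theorem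
of calculus gives `θ̃'(r) = (log 2)⁻² (2 g(2r) - g(r))`. Rescaling both averages to `[1, 2]`
turns this into `(log 2)⁻² ∫_1^2 (θ(2rt) - θ(rt))/(rt) dt`, whose integrand is nonnegative
because `θ` is monotone; the mean value theorem then makes `θ̃` monotone.
-/

open Real MeasureTheory Set

section PositiveHalfLine

variable {ψ : ℝ → ℝ}

lemma uIcc_subset_Ioi_zero {a b : ℝ} (ha : 0 < a) (hb : 0 < b) : uIcc a b ⊆ Ioi 0 :=
  fun _ hx => (lt_min ha hb).trans_le hx.1

lemma MeasureTheory.LocallyIntegrableOn.intervalIntegrable_of_pos (hψ : LocallyIntegrableOn ψ (Ioi 0))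
    {a b : ℝ} (ha : 0 < a) (hb : 0 < b) : IntervalIntegrable ψ volume a b :=
  (hψ.integrableOn_compact_subset (uIcc_subset_Ioi_zero ha hb) isCompact_uIcc).intervalIntegrable

lemma MonotoneOn.locallyIntegrableOn_div_id {θ : ℝ → ℝ} (hθ : MonotoneOn θ (Ioi 0)) :
    LocallyIntegrableOn (fun s => θ s / s) (Ioi 0) := by
  refine (locallyIntegrableOn_iff isOpen_Ioi.isLocallyClosed).2 fun k hk hkc => ?_
  simpa only [div_eq_mul_inv] using ((hθ.mono hk).integrableOn_isCompact hkc).mul_continuousOn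
    (continuousOn_inv₀.mono fun x hx => (hk hx).ne') hkc

lemma MeasureTheory.LocallyIntegrableOn.continuousOn_primitive_Ioi (hψ : LocallyIntegrableOn ψ (Ioi 0))
    {a : ℝ} (ha : 0 < a) : ContinuousOn (fun y => ∫ s in a..y, ψ s) (Ioi 0) := by
  intro y hy
  have hlo : min a (y / 2) < y := (min_le_right _ _).trans_lt (half_lt_self hy)
  have hhi : y < max a (2 * y) := (lt_two_mul_self hy).trans_le (le_max_right _ _)
  have hle : min a (y / 2) ≤ max a (2 * y) := hlo.le.trans hhi.le
  have hint := hψ.intervalIntegrable_of_pos (lt_min ha (half_pos hy)) (hy.trans hhi)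
  have hprim := intervalIntegral.continuousOn_primitive_interval' hint
    (by rw [uIcc_of_le hle]; exact ⟨min_le_left _ _, le_max_left _ _⟩)
  exact (hprim.continuousAt (by rw [uIcc_of_le hle]; exact Icc_mem_nhds hlo hhi)).continuousWithinAt

lemma MeasureTheory.LocallyIntegrableOn.integral_mul_self_eq_sub (hψ : LocallyIntegrableOn ψ (Ioi 0))
    {a c x : ℝ} (ha : 0 < a) (hc : 0 < c) (hx : 0 < x) :
    ∫ s in x..(c * x), ψ s = (∫ s in a..(c * x), ψ s) - ∫ s in a..x, ψ s :=
  (intervalIntegral.integral_interval_sub_left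
    (hψ.intervalIntegrable_of_pos ha (mul_pos hc hx)) (hψ.intervalIntegrable_of_pos ha hx)).symm

lemma MeasureTheory.LocallyIntegrableOn.continuousOn_integral_mul_self (hψ : LocallyIntegrableOn ψ (Ioi 0))
    {c : ℝ} (hc : 0 < c) : ContinuousOn (fun x => ∫ s in x..(c * x), ψ s) (Ioi 0) := by
  have hΨ := hψ.continuousOn_primitive_Ioi one_pos
  refine ((hΨ.comp (continuousOn_const.mul continuousOn_id) fun x hx => mul_pos hc hx).sub
    hΨ).congr fun x hx => hψ.integral_mul_self_eq_sub one_pos hc hx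

lemma ContinuousOn.hasDerivAt_integral_mul_self (hψ : ContinuousOn ψ (Ioi 0)) {c x : ℝ}
    (hc : 0 < c) (hx : 0 < x) :
    HasDerivAt (fun y => ∫ s in y..(c * y), ψ s) (c * ψ (c * x) - ψ x) x := by
  have hloc : LocallyIntegrableOn ψ (Ioi 0) := hψ.locallyIntegrableOn measurableSet_Ioi
  have hΨ : ∀ y > 0, HasDerivAt (fun z => ∫ s in (1 : ℝ)..z, ψ s) (ψ y) y := fun y hy =>
    intervalIntegral.integral_hasDerivAt_right (hloc.intervalIntegrable_of_pos one_pos hy)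
      (hψ.stronglyMeasurableAtFilter isOpen_Ioi y hy) (hψ.continuousAt (Ioi_mem_nhds hy))
  have hsub := ((hΨ (c * x) (mul_pos hc hx)).comp x ((hasDerivAt_id x).const_mul c)).sub (hΨ x hx)
  rw [mul_one, mul_comm] at hsub
  refine hsub.congr_of_eventuallyEq ?_
  filter_upwards [Ioi_mem_nhds hx] with y hy
  exact hloc.integral_mul_self_eq_sub one_pos hc hy

lemma one_div_mul_integral_eq_integral_comp_mul (ψ : ℝ → ℝ) {r : ℝ} (hr : r ≠ 0) :
    (1 / r) * ∫ s in r..(2 * r), ψ s = ∫ t in (1 : ℝ)..2, ψ (r * t) := by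
  rw [intervalIntegral.integral_comp_mul_left _ hr, mul_one, mul_comm r 2, smul_eq_mul, one_div]

end PositiveHalfLine

section LogarithmicAverage

variable {θ : ℝ → ℝ}

lemma two_mul_average_sub_average_eq_integral (hθ : MonotoneOn θ (Ioi 0)) {r : ℝ} (hr : 0 < r) :
    2 * ((1 / (2 * r)) * ∫ s in (2 * r)..(2 * (2 * r)), θ s / s)
        - (1 / r) * ∫ s in r..(2 * r), θ s / s
      = ∫ t in (1 : ℝ)..2, (θ (2 * r * t) - θ (r * t)) / (r * t) := by
  have hint : ∀ {a : ℝ}, 0 < a →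
      IntervalIntegrable (fun t => θ (a * t) / (a * t)) volume 1 2 := by
    intro a ha
    have := (hθ.locallyIntegrableOn_div_id.intervalIntegrable_of_pos ha
      (mul_pos two_pos ha)).comp_mul_left (c := a)
    simpa [ha.ne'] using this
  rw [one_div_mul_integral_eq_integral_comp_mul _ (by positivity),
    one_div_mul_integral_eq_integral_comp_mul _ hr.ne', ← intervalIntegral.integral_const_mul,
    ← intervalIntegral.integral_sub ((hint (by positivity)).const_mul 2) (hint hr)]
  refine intervalIntegral.integral_congr fun t ht => ?_
  have hrt : 0 < r * t := mul_pos hr (one_pos.trans_le (by simpa using ht.1))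
  field_simp

lemma integral_sub_div_nonneg (hθ : MonotoneOn θ (Ioi 0)) {r : ℝ} (hr : 0 < r) :
    0 ≤ ∫ t in (1 : ℝ)..2, (θ (2 * r * t) - θ (r * t)) / (r * t) := by
  refine intervalIntegral.integral_nonneg one_le_two fun t ht => ?_
  have hrt : 0 < r * t := mul_pos hr (one_pos.trans_le ht.1)
  have h2rt : r * t ≤ 2 * r * t := by
    rw [mul_assoc]; exact le_mul_of_one_le_left hrt.le one_le_two
  exact div_nonneg (sub_nonneg.2 (hθ hrt (hrt.trans_le h2rt) h2rt)) hrt.le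

lemma hasDerivAt_integral_one_div_mul_integral (hθ : MonotoneOn θ (Ioi 0)) {r : ℝ} (hr : 0 < r) :
    HasDerivAt (fun x : ℝ => ∫ t in x..(2 * x), (1 / t) * ∫ s in t..(2 * t), θ s / s)
      (∫ t in (1 : ℝ)..2, (θ (2 * r * t) - θ (r * t)) / (r * t)) r := by
  have hg : ContinuousOn (fun t : ℝ => (1 / t) * ∫ s in t..(2 * t), θ s / s) (Ioi 0) :=
    (continuousOn_const.div continuousOn_id fun t ht => ht.ne').mul
      (hθ.locallyIntegrableOn_div_id.continuousOn_integral_mul_self two_pos)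
  rw [← two_mul_average_sub_average_eq_integral hθ hr]
  exact hg.hasDerivAt_integral_mul_self two_pos hr

end LogarithmicAverage

theorem stmt6_general (θ : ℝ → ℝ)
    (hmono : MonotoneOn θ (Set.Ioi 0)) :
    ∀ r > 0,
      HasDerivAt (fun r : ℝ => (Real.log 2)⁻¹ ^ 2 *
          ∫ t in r..(2 * r), (1 / t) * ∫ s in t..(2 * t), θ s / s)
        ((Real.log 2)⁻¹ ^ 2 * ∫ t in (1:ℝ)..2, (θ (2 * r * t) - θ (r * t)) / (r * t)) r ∧
      0 ≤ (Real.log 2)⁻¹ ^ 2 * ∫ t in (1:ℝ)..2, (θ (2 * r * t) - θ (r * t)) / (r * t) ∧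
      MonotoneOn (fun r : ℝ => (Real.log 2)⁻¹ ^ 2 *
          ∫ t in r..(2 * r), (1 / t) * ∫ s in t..(2 * t), θ s / s) (Set.Ioi 0) := by
  have hderiv : ∀ r > 0, HasDerivAt (fun r : ℝ => (Real.log 2)⁻¹ ^ 2 *
          ∫ t in r..(2 * r), (1 / t) * ∫ s in t..(2 * t), θ s / s)
        ((Real.log 2)⁻¹ ^ 2 * ∫ t in (1:ℝ)..2, (θ (2 * r * t) - θ (r * t)) / (r * t)) r :=
    fun r hr => (hasDerivAt_integral_one_div_mul_integral hmono hr).const_mul _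
  have hnonneg : ∀ r > 0,
      0 ≤ (Real.log 2)⁻¹ ^ 2 * ∫ t in (1:ℝ)..2, (θ (2 * r * t) - θ (r * t)) / (r * t) :=
    fun r hr => mul_nonneg (by positivity) (integral_sub_div_nonneg hmono hr)
  refine fun r hr => ⟨hderiv r hr, hnonneg r hr, ?_⟩
  exact monotoneOn_of_hasDerivWithinAt_nonneg (convex_Ioi 0)
    (fun x hx => (hderiv x hx).continuousAt.continuousWithinAt)
    (fun x hx => (hderiv x (interior_subset hx)).hasDerivWithinAt)
    (fun x hx => hnonneg x (interior_subset hx))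

theorem stmt6 (θ : ℝ → ℝ) (hpos : ∀ r > 0, 0 < θ r)
    (hmono : MonotoneOn θ (Set.Ioi 0)) :
    ∀ r > 0,
      HasDerivAt (fun r : ℝ => (Real.log 2)⁻¹ ^ 2 *
          ∫ t in r..(2 * r), (1 / t) * ∫ s in t..(2 * t), θ s / s)
        ((Real.log 2)⁻¹ ^ 2 * ∫ t in (1:ℝ)..2, (θ (2 * r * t) - θ (r * t)) / (r * t)) r ∧
      0 ≤ (Real.log 2)⁻¹ ^ 2 * ∫ t in (1:ℝ)..2, (θ (2 * r * t) - θ (r * t)) / (r * t) ∧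
      MonotoneOn (fun r : ℝ => (Real.log 2)⁻¹ ^ 2 *
          ∫ t in r..(2 * r), (1 / t) * ∫ s in t..(2 * t), θ s / s) (Set.Ioi 0) :=
  stmt6_general θ hmono
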